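/- arXiv:2212.01788 — 2 statements merged into one kernel-verified Lean document; each statement's English description precedes it below -/
import Mathlib

section
/- Let n ≥ 1 and let A be a real n×n matrix satisfying the cyclic non-increasing condition such that the whole vertex set {1,…,n} is the only strongly connected component of the graph 𝒢(A). Then the system Aᵀx = e has at most one solution, and if x is a solution, then either x_i < 0 for all i or x_i > 0 for all i. -/
open Matrix BigOperators

/-- The cyclic non-increasing condition: each row of `A` weakly decreases
cyclically starting from the diagonal, i.e. `a_{i[j-1]} ≥ a_{ij}` for all
`j ≠ i` (indices in `Fin n`, arithmetic mod `n`). -/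
def CyclicNonIncr {n : ℕ} [NeZero n] (A : Matrix (Fin n) (Fin n) ℝ) : Prop :=
  ∀ i j : Fin n, j ≠ i → A i (j - 1) ≥ A i j

/-- The directed graph `𝒢(A)` has an edge from `i` to `j` iff `a_{i[j-1]} > a_{ij}`. -/
def GraphEdge {n : ℕ} [NeZero n] (A : Matrix (Fin n) (Fin n) ℝ) (i j : Fin n) : Prop :=
  A i (j - 1) > A i j

/-- `i` and `j` are strongly connected in `𝒢(A)`: there are directed paths
(possibly of length 0) from `i` to `j` and from `j` to `i`. -/
def Conn {n : ℕ} [NeZero n] (A : Matrix (Fin n) (Fin n) ℝ) (i j : Fin n) : Prop :=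
  Relation.ReflTransGen (GraphEdge A) i j ∧ Relation.ReflTransGen (GraphEdge A) j i

/-- `C` is a strongly connected component of `𝒢(A)`: an equivalence class of
the strong-connectivity relation. -/
def IsSCC {n : ℕ} [NeZero n] (A : Matrix (Fin n) (Fin n) ℝ) (C : Set (Fin n)) : Prop :=
  ∃ i, C = {j | Conn A i j}

/-- `C` is a closed SCC of `𝒢(A)`: an SCC with no edge leaving it. -/
def IsClosedSCC {n : ℕ} [NeZero n] (A : Matrix (Fin n) (Fin n) ℝ) (C : Set (Fin n)) : Prop :=
  IsSCC A C ∧ ∀ i ∈ C, ∀ j, GraphEdge A i j → j ∈ C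

/-- `C` is an open SCC of `𝒢(A)`: an SCC with some edge leaving it. -/
def IsOpenSCC {n : ℕ} [NeZero n] (A : Matrix (Fin n) (Fin n) ℝ) (C : Set (Fin n)) : Prop :=
  IsSCC A C ∧ ¬ (∀ i ∈ C, ∀ j, GraphEdge A i j → j ∈ C)


/-!
Write `L` for the matrix with entries `a_{i[j-1]} - a_{ij}`: its off-diagonal entries are
nonnegative, its rows sum to zero, and its positive entries are the edges of `𝒢(A)`.
Any `x` with `Aᵀx` constant satisfies `xᵀL = 0`. For such `x`, the positive part `x⁺` has
`(x⁺)ᵀL ≥ 0` entrywise with total sum `x⁺ ⬝ L e = 0`, so `(x⁺)ᵀL = 0`; reading this in a column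
`b` with `x_b ≤ 0` shows that no edge enters `b` from a vertex where `x` is positive.
Hence positivity (and, applied to `-x`, negativity) spreads along edges, and strong
connectivity makes a nonzero `x` strictly of one sign. A solution of `Aᵀx = e` is nonzero,
and if two solutions differed, some point of the line through them would be a solution
with a zero entry.
-/

section Generator

variable {ι : Type*} [Fintype ι] {L : Matrix ι ι ℝ}

theorem pos_of_vecMul_eq_zero_of_pos (hoff : ∀ i j, i ≠ j → 0 ≤ L i j) (hrow : L *ᵥ 1 = 0)
    {z : ι → ℝ} (hz : z ᵥ* L = 0) {a b : ι} (hab : 0 < L a b) (ha : 0 < z a) : 0 < z b := by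
  set w : ι → ℝ := fun i => max (z i) 0
  have hw : ∀ i, 0 ≤ w i := fun i => le_max_right _ _
  have hcol_nonneg : ∀ j, 0 ≤ (w ᵥ* L) j := by
    intro j
    by_cases hj : z j ≤ 0
    · refine Finset.sum_nonneg fun i _ => ?_
      rcases eq_or_ne i j with rfl | hij
      · simp [w, max_eq_right hj]
      · exact mul_nonneg (hw i) (hoff i j hij)
    · calc (0 : ℝ) = (z ᵥ* L) j := by rw [hz]; rfl
        _ ≤ (w ᵥ* L) j := by
          refine Finset.sum_le_sum fun i _ => ?_
          rcases eq_or_ne i j with rfl | hij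
          · simp [w, max_eq_left (not_le.1 hj).le]
          · exact mul_le_mul_of_nonneg_right (le_max_left _ _) (hoff i j hij)
  have hcol : (w ᵥ* L) b = 0 := by
    have htotal : ∑ j, (w ᵥ* L) j = 0 := by
      rw [← dotProduct_one, ← dotProduct_mulVec, hrow, dotProduct_zero]
    exact (Finset.sum_eq_zero_iff_of_nonneg fun j _ => hcol_nonneg j).1 htotal b
      (Finset.mem_univ b)
  by_contra! hb
  have hterms : ∀ i ∈ Finset.univ, 0 ≤ w i * L i b := by
    intro i _
    rcases eq_or_ne i b with rfl | hib
    · simp [w, max_eq_right hb]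
    · exact mul_nonneg (hw i) (hoff i b hib)
  have hzero := (Finset.sum_eq_zero_iff_of_nonneg hterms).1 hcol a (Finset.mem_univ a)
  have hwa : w a = z a := max_eq_left ha.le
  rw [hwa] at hzero
  exact (mul_pos ha hab).ne' hzero

theorem pos_of_reflTransGen (hoff : ∀ i j, i ≠ j → 0 ≤ L i j) (hrow : L *ᵥ 1 = 0)
    {z : ι → ℝ} (hz : z ᵥ* L = 0) {a b : ι}
    (hab : Relation.ReflTransGen (fun i j => 0 < L i j) a b) (ha : 0 < z a) : 0 < z b := by
  induction hab with
  | refl => exact ha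
  | tail _ hedge ih => exact pos_of_vecMul_eq_zero_of_pos hoff hrow hz hedge ih

theorem sign_trichotomy_of_vecMul_eq_zero (hoff : ∀ i j, i ≠ j → 0 ≤ L i j)
    (hrow : L *ᵥ 1 = 0) (hconn : ∀ a b, Relation.ReflTransGen (fun i j => 0 < L i j) a b)
    {z : ι → ℝ} (hz : z ᵥ* L = 0) : (∀ i, z i < 0) ∨ (∀ i, 0 < z i) ∨ z = 0 := by
  by_cases h0 : z = 0
  · exact Or.inr (Or.inr h0)
  obtain ⟨a, ha⟩ := Function.ne_iff.1 h0
  rcases ha.lt_or_gt with hneg | hpos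
  · have hz' : -z ᵥ* L = 0 := by rw [neg_vecMul, hz, neg_zero]
    refine Or.inl fun i => neg_pos.1 ?_
    exact pos_of_reflTransGen hoff hrow hz' (hconn a i) (neg_pos.2 hneg)
  · exact Or.inr (Or.inl fun i => pos_of_reflTransGen hoff hrow hz (hconn a i) hpos)

end Generator

section Cyclic

variable {n : ℕ} [NeZero n] {A : Matrix (Fin n) (Fin n) ℝ}

def cyclicDiff (A : Matrix (Fin n) (Fin n) ℝ) : Matrix (Fin n) (Fin n) ℝ :=
  Matrix.of fun i j => A i (j - 1) - A i j

theorem graphEdge_iff_cyclicDiff_pos {i j : Fin n} : GraphEdge A i j ↔ 0 < cyclicDiff A i j :=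
  sub_pos.symm

theorem cyclicDiff_nonneg (hA : CyclicNonIncr A) {i j : Fin n} (hij : i ≠ j) :
    0 ≤ cyclicDiff A i j :=
  sub_nonneg.2 (hA i j hij.symm)

theorem cyclicDiff_mulVec_one (A : Matrix (Fin n) (Fin n) ℝ) : cyclicDiff A *ᵥ 1 = 0 := by
  ext i
  have hshift : ∑ j, A i (j - 1) = ∑ j, A i j :=
    Fintype.sum_equiv (Equiv.subRight 1) _ _ fun _ => rfl
  simp [mulVec, cyclicDiff, dotProduct_one, Finset.sum_sub_distrib, hshift]

theorem vecMul_cyclicDiff_apply (x : Fin n → ℝ) (j : Fin n) :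
    (x ᵥ* cyclicDiff A) j = (x ᵥ* A) (j - 1) - (x ᵥ* A) j := by
  simp only [vecMul, dotProduct, cyclicDiff, of_apply, mul_sub, Finset.sum_sub_distrib]

theorem vecMul_cyclicDiff_eq_zero {x : Fin n → ℝ} {c : ℝ} (hx : x ᵥ* A = fun _ => c) :
    x ᵥ* cyclicDiff A = 0 := by
  ext j
  rw [vecMul_cyclicDiff_apply, hx, sub_self, Pi.zero_apply]

theorem reflTransGen_cyclicDiff_pos (hSCC : ∀ C : Set (Fin n), IsSCC A C → C = Set.univ)
    (a b : Fin n) : Relation.ReflTransGen (fun i j => 0 < cyclicDiff A i j) a b := by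
  have hb : b ∈ {j | Conn A a j} := by rw [hSCC _ ⟨a, rfl⟩]; exact Set.mem_univ b
  exact Relation.ReflTransGen.mono (fun _ _ => graphEdge_iff_cyclicDiff_pos.1) a b hb.1

theorem sign_trichotomy_of_vecMul_const (hA : CyclicNonIncr A)
    (hSCC : ∀ C : Set (Fin n), IsSCC A C → C = Set.univ) {x : Fin n → ℝ} {c : ℝ}
    (hx : x ᵥ* A = fun _ => c) : (∀ i, x i < 0) ∨ (∀ i, 0 < x i) ∨ x = 0 :=
  sign_trichotomy_of_vecMul_eq_zero (fun _ _ => cyclicDiff_nonneg hA) (cyclicDiff_mulVec_one A)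
    (reflTransGen_cyclicDiff_pos hSCC) (vecMul_cyclicDiff_eq_zero hx)

theorem sign_of_vecMul_eq_one (hA : CyclicNonIncr A)
    (hSCC : ∀ C : Set (Fin n), IsSCC A C → C = Set.univ) {x : Fin n → ℝ}
    (hx : x ᵥ* A = fun _ => 1) : (∀ i, x i < 0) ∨ (∀ i, 0 < x i) := by
  rcases sign_trichotomy_of_vecMul_const hA hSCC hx with hneg | hpos | rfl
  · exact Or.inl hneg
  · exact Or.inr hpos
  · have h := congrFun hx 0
    simp at h

theorem eq_of_vecMul_eq_one (hA : CyclicNonIncr A)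
    (hSCC : ∀ C : Set (Fin n), IsSCC A C → C = Set.univ) {x y : Fin n → ℝ}
    (hx : x ᵥ* A = fun _ => 1) (hy : y ᵥ* A = fun _ => 1) : x = y := by
  have hxy : (x - y) ᵥ* A = fun _ => 0 := by rw [sub_vecMul, hx, hy]; ext; simp
  have hdichotomy : x - y = 0 ∨ x 0 - y 0 ≠ 0 := by
    rcases sign_trichotomy_of_vecMul_const hA hSCC hxy with hneg | hpos | hzero
    exacts [Or.inr (hneg 0).ne, Or.inr (hpos 0).ne', Or.inl hzero]
  refine sub_eq_zero.1 (hdichotomy.resolve_right fun hz0 => ?_)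
  set u := x - (x 0 / (x 0 - y 0)) • (x - y)
  have hu : u ᵥ* A = fun _ => 1 := by
    rw [sub_vecMul, smul_vecMul, hxy, hx]; ext; simp
  have hu0 : u 0 = 0 := by simp only [Pi.sub_apply, Pi.smul_apply, smul_eq_mul, u]; field_simp; ring
  rcases sign_of_vecMul_eq_one hA hSCC hu with h | h
  exacts [(h 0).ne hu0, (h 0).ne' hu0]

end Cyclic

theorem stmt_7_general (n : ℕ) [NeZero n] (A : Matrix (Fin n) (Fin n) ℝ)
    (hA : CyclicNonIncr A)
    (hSCC : ∀ C : Set (Fin n), IsSCC A C → C = Set.univ) :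
    (∀ x y : Fin n → ℝ, Aᵀ.mulVec x = (fun _ => (1 : ℝ)) →
      Aᵀ.mulVec y = (fun _ => (1 : ℝ)) → x = y) ∧
    (∀ x : Fin n → ℝ, Aᵀ.mulVec x = (fun _ => (1 : ℝ)) →
      (∀ i, x i < 0) ∨ (∀ i, 0 < x i)) := by
  simp only [mulVec_transpose]
  exact ⟨fun _ _ => eq_of_vecMul_eq_one hA hSCC, fun _ => sign_of_vecMul_eq_one hA hSCC⟩

theorem stmt_7 (n : ℕ) [NeZero n] (hn : 1 ≤ n) (A : Matrix (Fin n) (Fin n) ℝ)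
    (hA : CyclicNonIncr A)
    (hSCC : ∀ C : Set (Fin n), IsSCC A C → C = Set.univ) :
    (∀ x y : Fin n → ℝ, Aᵀ.mulVec x = (fun _ => (1 : ℝ)) →
      Aᵀ.mulVec y = (fun _ => (1 : ℝ)) → x = y) ∧
    (∀ x : Fin n → ℝ, Aᵀ.mulVec x = (fun _ => (1 : ℝ)) →
      (∀ i, x i < 0) ∨ (∀ i, 0 < x i)) :=
  stmt_7_general n A hA hSCC
end

section
/- Let n ≥ 1 and let A be a real n×n matrix satisfying the cyclic non-increasing condition such that Ae > 0 (all row sums strictly positive). Then det A = 0 if the graph 𝒢(A) has more than one closed strongly connected component, and det A > 0 if 𝒢(A) has exactly one closed strongly connected component. -/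
open Matrix BigOperators

/-!
Summation by parts against the cyclic potential `φ j = ∑_{t<j} x t - j • mean x` (well defined
around the cycle because `x - mean x` sums to zero) rewrites `(A x)_i - mean x * (A e)_i` as
`∑ j, (a_{i,j-1} - a_{ij}) * (φ j - φ i)`, whose weights are nonnegative and positive exactly
along the edges of `𝒢(A)`. This gives a maximum principle: at a maximiser of `φ` on an edge-closed
set, `(A x)_i ≤ mean x * (A e)_i`, and the reverse at a minimiser.

With two disjoint closed components, a solution of `A x = (A e) · 1_{C₁}` would need
`mean x ≥ 1` (on `C₁`) and `mean x ≤ 0` (on `C₂`). With a unique closed component any two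
nonempty edge-closed sets meet, and the maximum principle forces a kernel vector to have mean zero
and constant potential, hence to vanish. Along the homotopy `(1 - t) A + t I` the graph contains
the cycle `i → i + 1` for `t > 0`, so the determinant never vanishes and `det A` has the sign of
`det I = 1`.
-/

open Finset Fin.NatCast

section

variable {n : ℕ} [NeZero n]

noncomputable def cyclicPotential (x : Fin n → ℝ) (j : Fin n) : ℝ :=
  ∑ t ∈ range j, x t - (∑ k, x k) / n * j

lemma cyclicPotential_add_one (x : Fin n → ℝ) (j : Fin n) :
    cyclicPotential x (j + 1) - cyclicPotential x j = x j - (∑ k, x k) / n := by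
  by_cases hj : j.val + 1 < n
  · rw [cyclicPotential, cyclicPotential, Fin.val_add_one_of_lt' hj, sum_range_succ,
      Fin.cast_val_eq_self]
    push_cast
    ring
  · have hjn : j.val + 1 = n := by omega
    have hv : (j + 1 : Fin n).val = 0 := by
      rw [Fin.val_add, Fin.val_one', Nat.add_mod_mod, hjn, Nat.mod_self]
    have hsum : ∑ k, x k = ∑ t ∈ range j, x t + x j := by
      have h := sum_range_succ (fun t : ℕ => x t) j
      rw [Fin.cast_val_eq_self, hjn, ← Fin.sum_univ_eq_sum_range] at h
      simpa using h
    have hn : (n : ℝ) = j + 1 := by exact_mod_cast hjn.symm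
    rw [cyclicPotential, cyclicPotential, hv, hsum, hn]
    field_simp
    ring

lemma sum_jump_mul_sub (A : Matrix (Fin n) (Fin n) ℝ) (φ : Fin n → ℝ) (i : Fin n) :
    ∑ j, (A i (j - 1) - A i j) * (φ j - φ i) = ∑ j, A i j * (φ (j + 1) - φ j) := by
  have hshift : ∑ j, A i (j - 1) * (φ j - φ i) = ∑ j, A i j * (φ (j + 1) - φ i) :=
    (Fintype.sum_equiv (Equiv.addRight 1) _ _ fun j => by simp).symm
  calc ∑ j, (A i (j - 1) - A i j) * (φ j - φ i)
      = ∑ j, A i (j - 1) * (φ j - φ i) - ∑ j, A i j * (φ j - φ i) := by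
        simp only [sub_mul, sum_sub_distrib]
    _ = ∑ j, A i j * (φ (j + 1) - φ j) := by
        rw [hshift, ← sum_sub_distrib]
        simp only [← mul_sub, sub_sub_sub_cancel_right]

lemma sum_jump_mul_cyclicPotential_sub (A : Matrix (Fin n) (Fin n) ℝ) (x : Fin n → ℝ)
    (i : Fin n) :
    ∑ j, (A i (j - 1) - A i j) * (cyclicPotential x j - cyclicPotential x i) =
      (A *ᵥ x) i - (∑ k, x k) / n * (A *ᵥ fun _ => 1) i := by
  rw [sum_jump_mul_sub]
  simp only [cyclicPotential_add_one, mul_sub, sum_sub_distrib, mulVec, dotProduct, mul_one,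
    ← sum_mul]
  ring

def IsEdgeClosed (A : Matrix (Fin n) (Fin n) ℝ) (U : Set (Fin n)) : Prop :=
  ∀ i ∈ U, ∀ j, GraphEdge A i j → j ∈ U

lemma isEdgeClosed_univ (A : Matrix (Fin n) (Fin n) ℝ) : IsEdgeClosed A Set.univ :=
  fun _ _ _ _ => Set.mem_univ _

section MaximumPrinciple

variable {A : Matrix (Fin n) (Fin n) ℝ} {U : Set (Fin n)} {φ : Fin n → ℝ} {i : Fin n}

lemma jump_mul_sub_nonpos_of_forall_le (hA : CyclicNonIncr A) (hU : IsEdgeClosed A U)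
    (hi : i ∈ U) (hmax : ∀ j ∈ U, φ j ≤ φ i) (j : Fin n) :
    (A i (j - 1) - A i j) * (φ j - φ i) ≤ 0 := by
  rcases eq_or_ne j i with rfl | hji
  · simp
  by_cases hj : j ∈ U
  · exact mul_nonpos_of_nonneg_of_nonpos (sub_nonneg.mpr (hA i j hji))
      (sub_nonpos.mpr (hmax j hj))
  · have hjump : A i (j - 1) = A i j :=
      le_antisymm (not_lt.mp fun he => hj (hU i hi j he)) (hA i j hji)
    simp [hjump]

lemma IsEdgeClosed.exists_mulVec_le (hA : CyclicNonIncr A) (hU : IsEdgeClosed A U)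
    (hne : U.Nonempty) (x : Fin n → ℝ) :
    ∃ i ∈ U, (A *ᵥ x) i ≤ (∑ k, x k) / n * (A *ᵥ fun _ => 1) i := by
  obtain ⟨i, hi, hmax⟩ := Set.exists_max_image U (cyclicPotential x) U.toFinite hne
  refine ⟨i, hi, sub_nonpos.mp ?_⟩
  rw [← sum_jump_mul_cyclicPotential_sub]
  exact sum_nonpos fun j _ => jump_mul_sub_nonpos_of_forall_le hA hU hi hmax j

lemma IsEdgeClosed.exists_le_mulVec (hA : CyclicNonIncr A) (hU : IsEdgeClosed A U)
    (hne : U.Nonempty) (x : Fin n → ℝ) :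
    ∃ i ∈ U, (∑ k, x k) / n * (A *ᵥ fun _ => 1) i ≤ (A *ᵥ x) i := by
  obtain ⟨i, hi, h⟩ := hU.exists_mulVec_le hA hne (-x)
  refine ⟨i, hi, ?_⟩
  simp only [mulVec_neg, Pi.neg_apply, sum_neg_distrib, neg_div, neg_mul] at h
  exact neg_le_neg_iff.mp h

lemma isEdgeClosed_setOf_eq_of_forall_le (hA : CyclicNonIncr A)
    (hφ : ∀ i, ∑ j, (A i (j - 1) - A i j) * (φ j - φ i) = 0) {M : ℝ} (hM : ∀ j, φ j ≤ M) :
    IsEdgeClosed A {j | φ j = M} := by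
  intro i hi j he
  have hterm := (sum_eq_zero_iff_of_nonpos fun k _ =>
    jump_mul_sub_nonpos_of_forall_le hA (isEdgeClosed_univ A) (Set.mem_univ i)
      (fun k _ => hi ▸ hM k) k).mp (hφ i) j (mem_univ j)
  rw [mul_eq_zero, sub_eq_zero, sub_eq_zero] at hterm
  exact (hterm.resolve_left (ne_of_gt he)).trans hi

lemma isEdgeClosed_setOf_eq_of_le_forall (hA : CyclicNonIncr A)
    (hφ : ∀ i, ∑ j, (A i (j - 1) - A i j) * (φ j - φ i) = 0) {m : ℝ} (hm : ∀ j, m ≤ φ j) :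
    IsEdgeClosed A {j | φ j = m} := by
  have hnegφ : ∀ i, ∑ j, (A i (j - 1) - A i j) * ((-φ) j - (-φ) i) = 0 := fun i => by
    rw [← neg_eq_zero, ← hφ i, ← sum_neg_distrib]
    exact sum_congr rfl fun j _ => by simp only [Pi.neg_apply]; ring
  simpa only [Pi.neg_apply, neg_inj] using
    isEdgeClosed_setOf_eq_of_forall_le hA hnegφ (M := -m) fun j => neg_le_neg (hm j)

end MaximumPrinciple

section Determinant

variable {A : Matrix (Fin n) (Fin n) ℝ}

theorem det_ne_zero_of_isEdgeClosed_inter (hA : CyclicNonIncr A)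
    (hrow : ∀ i, 0 < (A *ᵥ fun _ => 1) i)
    (hinter : ∀ U V, IsEdgeClosed A U → IsEdgeClosed A V → U.Nonempty → V.Nonempty →
      (U ∩ V).Nonempty) :
    A.det ≠ 0 := by
  intro hdet
  obtain ⟨x, hx0, hx⟩ := exists_mulVec_eq_zero_iff.mpr hdet
  have hμ : (∑ k, x k) / n = 0 := by
    obtain ⟨i, -, hi⟩ := (isEdgeClosed_univ A).exists_le_mulVec hA Set.univ_nonempty x
    obtain ⟨j, -, hj⟩ := (isEdgeClosed_univ A).exists_mulVec_le hA Set.univ_nonempty x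
    rw [hx, Pi.zero_apply] at hi hj
    exact le_antisymm (nonpos_of_mul_nonpos_left hi (hrow i))
      (nonneg_of_mul_nonneg_left hj (hrow j))
  set φ := cyclicPotential x
  have hφ : ∀ i, ∑ j, (A i (j - 1) - A i j) * (φ j - φ i) = 0 := fun i => by
    rw [sum_jump_mul_cyclicPotential_sub, hx, hμ, Pi.zero_apply, zero_mul, sub_zero]
  obtain ⟨imax, -, hmax⟩ := exists_max_image univ φ univ_nonempty
  obtain ⟨imin, -, hmin⟩ := exists_min_image univ φ univ_nonempty
  obtain ⟨k, hkmax, hkmin⟩ := hinter _ _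
    (isEdgeClosed_setOf_eq_of_forall_le hA hφ fun j => hmax j (mem_univ j))
    (isEdgeClosed_setOf_eq_of_le_forall hA hφ fun j => hmin j (mem_univ j))
    ⟨imax, rfl⟩ ⟨imin, rfl⟩
  have hconst : ∀ j, φ j = φ imax := fun j =>
    le_antisymm (hmax j (mem_univ j)) (hkmax.symm.trans hkmin ▸ hmin j (mem_univ j))
  apply hx0
  funext j
  have h : φ (j + 1) - φ j = x j - 0 := hμ ▸ cyclicPotential_add_one x j
  rw [hconst (j + 1), hconst j, sub_self, sub_zero] at h
  exact h.symm

theorem det_eq_zero_of_disjoint_isEdgeClosed (hA : CyclicNonIncr A)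
    (hrow : ∀ i, 0 < (A *ᵥ fun _ => 1) i) {U V : Set (Fin n)}
    (hU : IsEdgeClosed A U) (hV : IsEdgeClosed A V) (hUne : U.Nonempty) (hVne : V.Nonempty)
    (hUV : Disjoint U V) :
    A.det = 0 := by
  by_contra hdet
  obtain ⟨x, hx⟩ : ∃ x, A *ᵥ x = U.indicator (A *ᵥ fun _ => 1) :=
    ⟨A⁻¹ *ᵥ U.indicator (A *ᵥ fun _ => 1), by
      rw [mulVec_mulVec, mul_nonsing_inv _ (isUnit_iff_ne_zero.mpr hdet), one_mulVec]⟩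
  obtain ⟨i, hiU, hi⟩ := hU.exists_mulVec_le hA hUne x
  obtain ⟨j, hjV, hj⟩ := hV.exists_le_mulVec hA hVne x
  rw [hx, Set.indicator_of_mem hiU] at hi
  rw [hx, Set.indicator_of_notMem (Set.disjoint_right.mp hUV hjV)] at hj
  nlinarith [hrow i, hrow j]

end Determinant

section StronglyConnectedComponents

variable {A : Matrix (Fin n) (Fin n) ℝ}

lemma IsSCC.nonempty {C : Set (Fin n)} (hC : IsSCC A C) : C.Nonempty := by
  obtain ⟨i, rfl⟩ := hC
  exact ⟨i, .refl, .refl⟩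

lemma IsSCC.disjoint {C D : Set (Fin n)} (hC : IsSCC A C) (hD : IsSCC A D) (hCD : C ≠ D) :
    Disjoint C D := by
  obtain ⟨i, rfl⟩ := hC
  obtain ⟨j, rfl⟩ := hD
  refine Set.disjoint_left.mpr fun k hik hjk => hCD (Set.ext fun l => ?_)
  exact ⟨fun hil => ⟨hjk.1.trans (hik.2.trans hil.1), hil.2.trans (hik.1.trans hjk.2)⟩,
    fun hjl => ⟨hik.1.trans (hjk.2.trans hjl.1), hjl.2.trans (hjk.1.trans hik.2)⟩⟩

lemma IsEdgeClosed.exists_isClosedSCC_subset {W : Set (Fin n)} (hW : IsEdgeClosed A W)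
    (hne : W.Nonempty) : ∃ C, IsClosedSCC A C ∧ C ⊆ W := by
  classical
  let reach (i : Fin n) : Finset (Fin n) := {j | Relation.ReflTransGen (GraphEdge A) i j}
  obtain ⟨i, hiW, hmin⟩ := Set.exists_min_image W (fun i => (reach i).card) W.toFinite hne
  have hreachW : ∀ j, Relation.ReflTransGen (GraphEdge A) i j → j ∈ W := fun j hij => by
    induction hij with
    | refl => exact hiW
    | tail _ hkl ih => exact hW _ ih _ hkl
  have hback : ∀ j, Relation.ReflTransGen (GraphEdge A) i j →
      Relation.ReflTransGen (GraphEdge A) j i := fun j hij => by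
    have hsub : reach j ⊆ reach i := fun k hk => by
      simp only [reach, mem_filter, mem_univ, true_and] at hk ⊢
      exact hij.trans hk
    have heq := eq_of_subset_of_card_le hsub (hmin j (hreachW j hij))
    have hi : i ∈ reach j := heq ▸ by simp [reach, Relation.ReflTransGen.refl]
    simpa [reach] using hi
  refine ⟨{j | Conn A i j}, ⟨⟨i, rfl⟩, fun j hj k hjk => ?_⟩, fun j hj => hreachW j hj.1⟩
  exact ⟨hj.1.tail hjk, hback k (hj.1.tail hjk)⟩

end StronglyConnectedComponents

section Homotopy

variable {A B : Matrix (Fin n) (Fin n) ℝ}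

lemma CyclicNonIncr.add (hA : CyclicNonIncr A) (hB : CyclicNonIncr B) :
    CyclicNonIncr (A + B) :=
  fun i j hji => add_le_add (hA i j hji) (hB i j hji)

lemma CyclicNonIncr.smul (hA : CyclicNonIncr A) {c : ℝ} (hc : 0 ≤ c) :
    CyclicNonIncr (c • A) :=
  fun i j hji => mul_le_mul_of_nonneg_left (hA i j hji) hc

lemma cyclicNonIncr_one : CyclicNonIncr (1 : Matrix (Fin n) (Fin n) ℝ) := fun i j hji => by
  rw [one_apply_ne hji.symm, one_apply]
  split_ifs <;> norm_num

lemma GraphEdge.add_left {i j : Fin n} (hB : GraphEdge B i j) (hA : CyclicNonIncr A)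
    (hji : j ≠ i) : GraphEdge (A + B) i j :=
  add_lt_add_of_le_of_lt (hA i j hji) hB

lemma GraphEdge.smul {i j : Fin n} (hA : GraphEdge A i j) {c : ℝ} (hc : 0 < c) :
    GraphEdge (c • A) i j :=
  mul_lt_mul_of_pos_left hA hc

lemma graphEdge_one_add_one (h : (1 : Fin n) ≠ 0) (i : Fin n) :
    GraphEdge (1 : Matrix (Fin n) (Fin n) ℝ) i (i + 1) := by
  have hne : i ≠ i + 1 := fun hi => h (by simpa using hi)
  rw [GraphEdge, add_sub_cancel_right, one_apply_eq, one_apply_ne hne]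
  exact zero_lt_one

lemma IsEdgeClosed.eq_univ (hA : ∀ i, GraphEdge A i (i + 1)) {U : Set (Fin n)}
    (hU : IsEdgeClosed A U) (hne : U.Nonempty) : U = Set.univ := by
  obtain ⟨u, hu⟩ := hne
  have hstep : ∀ k : ℕ, u + k ∈ U := fun k => by
    induction k with
    | zero => simpa using hu
    | succ k ih => simpa [add_assoc] using hU _ ih _ (hA _)
  refine Set.eq_univ_of_forall fun j => ?_
  simpa using hstep (j - u).val

lemma det_homotopy_ne_zero (hA : CyclicNonIncr A) (hrow : ∀ i, 0 < (A *ᵥ fun _ => 1) i)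
    {t : ℝ} (ht₀ : 0 < t) (ht₁ : t ≤ 1) : ((1 - t) • A + t • 1).det ≠ 0 := by
  have hA' := hA.smul (sub_nonneg.mpr ht₁)
  refine det_ne_zero_of_isEdgeClosed_inter (hA'.add (cyclicNonIncr_one.smul ht₀.le))
    (fun i => ?_) fun U V _ hV ⟨u, hu⟩ hVne => ⟨u, hu, ?_⟩
  · simp only [add_mulVec, smul_mulVec, one_mulVec, Pi.add_apply, Pi.smul_apply, smul_eq_mul,
      mul_one]
    nlinarith [hrow i]
  · rcases eq_or_ne (1 : Fin n) 0 with h | h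
    · have hn : n = 1 :=
        Nat.dvd_one.mp (Nat.dvd_of_mod_eq_zero (by simpa [Fin.ext_iff, Fin.val_one'] using h))
      obtain ⟨v, hv⟩ := hVne
      exact (Fin.ext (by omega) : v = u) ▸ hv
    · have hedge i : GraphEdge ((1 - t) • A + t • 1) i (i + 1) :=
        ((graphEdge_one_add_one h i).smul ht₀).add_left hA' (by simpa using h)
      exact hV.eq_univ hedge hVne ▸ Set.mem_univ u

theorem det_pos_of_isEdgeClosed_inter (hA : CyclicNonIncr A)
    (hrow : ∀ i, 0 < (A *ᵥ fun _ => 1) i)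
    (hinter : ∀ U V, IsEdgeClosed A U → IsEdgeClosed A V → U.Nonempty → V.Nonempty →
      (U ∩ V).Nonempty) :
    0 < A.det := by
  have hcont : Continuous fun t : ℝ => ((1 - t) • A + t • 1).det := by fun_prop
  by_contra! hdet
  obtain ⟨t, ⟨ht₀, ht₁⟩, hzero⟩ := intermediate_value_Icc zero_le_one hcont.continuousOn
    (show (0 : ℝ) ∈ Set.Icc _ _ by simpa using hdet)
  rcases ht₀.eq_or_lt with rfl | ht₀
  · exact det_ne_zero_of_isEdgeClosed_inter hA hrow hinter (by simpa using hzero)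
  · exact det_homotopy_ne_zero hA hrow ht₀ ht₁ hzero

end Homotopy

end

theorem stmt_10_general (n : ℕ) [NeZero n] (A : Matrix (Fin n) (Fin n) ℝ)
    (hA : CyclicNonIncr A)
    (hrow : ∀ i, 0 < A.mulVec (fun _ => (1 : ℝ)) i) :
    ((∃ C₁ C₂ : Set (Fin n), IsClosedSCC A C₁ ∧ IsClosedSCC A C₂ ∧ C₁ ≠ C₂) →
      A.det = 0) ∧
    ((∃ C : Set (Fin n), IsClosedSCC A C ∧
      ∀ C' : Set (Fin n), IsClosedSCC A C' → C' = C) → 0 < A.det) := by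
  constructor
  · rintro ⟨C₁, C₂, h₁, h₂, hne⟩
    exact det_eq_zero_of_disjoint_isEdgeClosed hA hrow h₁.2 h₂.2 h₁.1.nonempty h₂.1.nonempty
      (h₁.1.disjoint h₂.1 hne)
  · rintro ⟨C, hC, huniq⟩
    refine det_pos_of_isEdgeClosed_inter hA hrow fun U V hU hV hUne hVne => ?_
    obtain ⟨CU, hCU, hCUU⟩ := hU.exists_isClosedSCC_subset hUne
    obtain ⟨CV, hCV, hCVV⟩ := hV.exists_isClosedSCC_subset hVne
    obtain ⟨c, hc⟩ := hC.1.nonempty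
    exact ⟨c, hCUU (huniq CU hCU ▸ hc), hCVV (huniq CV hCV ▸ hc)⟩

theorem stmt_10 (n : ℕ) [NeZero n] (hn : 1 ≤ n) (A : Matrix (Fin n) (Fin n) ℝ)
    (hA : CyclicNonIncr A)
    (hrow : ∀ i, 0 < A.mulVec (fun _ => (1 : ℝ)) i) :
    ((∃ C₁ C₂ : Set (Fin n), IsClosedSCC A C₁ ∧ IsClosedSCC A C₂ ∧ C₁ ≠ C₂) →
      A.det = 0) ∧
    ((∃ C : Set (Fin n), IsClosedSCC A C ∧
      ∀ C' : Set (Fin n), IsClosedSCC A C' → C' = C) → 0 < A.det) :=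
  stmt_10_general n A hA hrow
end
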